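/- Let L/K be a finite Galois extension of degree n with Galois group G and let σ ∈ G have odd multiplicative order 2r+1 > 1. Then for every nonzero b ∈ L, the rank of the alternating K-bilinear form f_{b,σ} equals n − n/(2r+1). -/

import Mathlib

/-!
Since `Tr(x · σ y) = Tr(σ⁻¹ x · y)` and the trace form is nondegenerate, `x` lies in the radical
of `f_{b,σ}` iff `σ(b) σ²(x) = b x`. The product `N = ∏_{i=0}^{r} σ^{2i}(b)` telescopes to
`b σ²(N) = σ(b) N` because `σ^{2(r+1)} = σ`, so the condition reads `σ²(N x) = N x`. As `σ` has odd
order, `σ²` generates `⟨σ⟩`, hence the radical is `N⁻¹ · L^⟨σ⟩`, of dimension `n / (2r+1)`.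
-/

variable {K L : Type*} [Field K] [Field L] [Algebra K L]

/-- The alternating bilinear form `f_{b,σ}(x,y) = Tr^L_K (b * (x * σ y - σ x * y))`,
where `Tr^L_K` is the trace form of the extension `L/K`. -/
noncomputable def galoisAltForm (b : L) (σ : L ≃ₐ[K] L) : (L →ₗ[K] L →ₗ[K] K) :=
  LinearMap.mk₂ K (fun x y => Algebra.trace K L (b * (x * σ y - σ x * y)))
    (fun x x' y => by
      try dsimp only
      rw [show b * ((x + x') * σ y - σ (x + x') * y)
            = b * (x * σ y - σ x * y) + b * (x' * σ y - σ x' * y) by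
          rw [map_add σ]; ring, map_add])
    (fun a x y => by
      try dsimp only
      rw [show b * ((a • x) * σ y - σ (a • x) * y)
            = a • (b * (x * σ y - σ x * y)) by
          rw [map_smul σ]
          simp only [smul_sub, smul_mul_assoc, mul_smul_comm, mul_sub], map_smul])
    (fun x y y' => by
      try dsimp only
      rw [show b * (x * σ (y + y') - σ x * (y + y'))
            = b * (x * σ y - σ x * y) + b * (x * σ y' - σ x * y') by
          rw [map_add σ]; ring, map_add])
    (fun a x y => by
      try dsimp only
      rw [show b * (x * σ (a • y) - σ x * (a • y))
            = a • (b * (x * σ y - σ x * y)) by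
          rw [map_smul σ]
          simp only [smul_sub, smul_mul_assoc, mul_smul_comm, mul_sub], map_smul])

/-- The rank of a bilinear form on `L`: `dim_K L` minus the dimension of its radical
`{x : L | ∀ y, f x y = 0}` (which is the kernel of `f` viewed as a map `L →ₗ[K] (L →ₗ[K] K)`). -/
noncomputable def formRank (f : (L →ₗ[K] L →ₗ[K] K)) : ℕ :=
  Module.finrank K L - Module.finrank K (LinearMap.ker f)

open Module IntermediateField

theorem Algebra.trace_mul_algEquiv_apply {R A : Type*} [CommRing R] [CommRing A] [Algebra R A]
    (σ : A ≃ₐ[R] A) (x y : A) :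
    Algebra.trace R A (x * σ y) = Algebra.trace R A (σ.symm x * y) := by
  rw [← Algebra.trace_eq_of_algEquiv σ (σ.symm x * y), map_mul σ, σ.apply_symm_apply]

theorem galoisAltForm_apply_eq_trace (b : L) (σ : L ≃ₐ[K] L) (x y : L) :
    galoisAltForm b σ x y = Algebra.trace K L ((σ.symm (b * x) - b * σ x) * y) := by
  rw [sub_mul, map_sub, ← Algebra.trace_mul_algEquiv_apply]
  change Algebra.trace K L (b * (x * σ y - σ x * y)) = _
  rw [mul_sub, map_sub, mul_assoc, mul_assoc]

theorem mem_ker_galoisAltForm_iff [FiniteDimensional K L] [Algebra.IsSeparable K L]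
    {b x : L} {σ : L ≃ₐ[K] L} :
    x ∈ LinearMap.ker (galoisAltForm b σ) ↔ σ b * σ (σ x) = b * x := by
  have hcond : σ b * σ (σ x) = b * x ↔ σ.symm (b * x) - b * σ x = 0 := by
    rw [sub_eq_zero, σ.symm_apply_eq, map_mul, eq_comm]
  rw [hcond, LinearMap.mem_ker]
  constructor
  · intro h
    refine (traceForm_nondegenerate K L).1 _ fun y => ?_
    rw [Algebra.traceForm_apply, ← galoisAltForm_apply_eq_trace, h, LinearMap.zero_apply]
  · intro h
    ext y
    rw [galoisAltForm_apply_eq_trace, h, zero_mul, map_zero, LinearMap.zero_apply]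

theorem MulAction.smul_eq_of_smul_smul_eq {G α : Type*} [Group G] [MulAction G α] {g : G} {a : α}
    (hg : Odd (orderOf g)) (h : g • g • a = a) : g • a = a := by
  obtain ⟨r, hr⟩ := hg
  have hg : g = (g ^ 2) ^ (r + 1) := by
    rw [← pow_mul, show 2 * (r + 1) = (2 * r + 1) + 1 by ring, pow_succ, ← hr,
      pow_orderOf_eq_one, one_mul]
  rw [← mul_smul, ← sq, ← mem_stabilizer_iff] at h
  rw [← mem_stabilizer_iff, hg]
  exact pow_mem h _

theorem mem_fixedField_zpowers_iff {σ : L ≃ₐ[K] L} {z : L} :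
    z ∈ fixedField (Subgroup.zpowers σ) ↔ σ z = z := by
  simp only [mem_fixedField_iff, ← AlgEquiv.smul_def, ← MulAction.mem_stabilizer_iff]
  exact Subgroup.zpowers_le

theorem mem_fixedField_zpowers_iff_of_odd {σ : L ≃ₐ[K] L} (hσ : Odd (orderOf σ)) {z : L} :
    z ∈ fixedField (Subgroup.zpowers σ) ↔ σ (σ z) = z := by
  rw [mem_fixedField_zpowers_iff]
  exact ⟨fun h => by rw [h, h], MulAction.smul_eq_of_smul_smul_eq hσ⟩

def evenPowProd {R A : Type*} [CommSemiring R] [CommSemiring A] [Algebra R A]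
    (σ : A ≃ₐ[R] A) (r : ℕ) (b : A) : A :=
  ∏ i ∈ Finset.range (r + 1), (σ ^ (2 * i)) b

theorem mul_apply_apply_evenPowProd {R A : Type*} [CommSemiring R] [CommSemiring A]
    [Algebra R A] {σ : A ≃ₐ[R] A} {r : ℕ} (hσ : σ ^ (2 * r + 1) = 1) (b : A) :
    b * σ (σ (evenPowProd σ r b)) = σ b * evenPowProd σ r b := by
  have hσσ : ∀ i, σ (σ ((σ ^ (2 * i)) b)) = (σ ^ (2 * (i + 1))) b := fun i => by
    rw [show 2 * (i + 1) = 2 + 2 * i by ring, pow_add, sq, AlgEquiv.mul_apply,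
      AlgEquiv.mul_apply]
  have hlast : σ ^ (2 * (r + 1)) = σ := by
    rw [show 2 * (r + 1) = (2 * r + 1) + 1 by ring, pow_succ, hσ, one_mul]
  calc b * σ (σ (evenPowProd σ r b))
      = ∏ i ∈ Finset.range (r + 2), (σ ^ (2 * i)) b := by
        simp only [evenPowProd, map_prod, hσσ, Finset.prod_range_succ' _ (r + 1), mul_zero,
          pow_zero, AlgEquiv.one_apply, mul_comm b]
    _ = σ b * evenPowProd σ r b := by
        rw [Finset.prod_range_succ, hlast, mul_comm, evenPowProd]

theorem evenPowProd_ne_zero {σ : L ≃ₐ[K] L} {r : ℕ} {b : L} (hb : b ≠ 0) :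
    evenPowProd σ r b ≠ 0 :=
  Finset.prod_ne_zero_iff.mpr fun _ _ => (map_ne_zero _).mpr hb

theorem mem_ker_galoisAltForm_iff_mul_mem_fixedField [FiniteDimensional K L]
    [Algebra.IsSeparable K L] {σ : L ≃ₐ[K] L} {r : ℕ} (hσ : orderOf σ = 2 * r + 1) {b : L}
    (hb : b ≠ 0) (x : L) :
    x ∈ LinearMap.ker (galoisAltForm b σ) ↔
      evenPowProd σ r b * x ∈ fixedField (Subgroup.zpowers σ) := by
  set N := evenPowProd σ r b
  have hN : b * σ (σ N) = σ b * N := mul_apply_apply_evenPowProd (hσ ▸ pow_orderOf_eq_one σ) b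
  rw [mem_ker_galoisAltForm_iff, mem_fixedField_zpowers_iff_of_odd (hσ ▸ odd_two_mul_add_one r),
    map_mul, map_mul]
  calc σ b * σ (σ x) = b * x
      ↔ N * (σ b * σ (σ x)) = N * (b * x) := (mul_right_inj' (evenPowProd_ne_zero hb)).symm
    _ ↔ b * (σ (σ N) * σ (σ x)) = b * (N * x) := by
        rw [← mul_assoc b, hN]
        constructor <;> intro h <;> linear_combination h
    _ ↔ σ (σ N) * σ (σ x) = N * x := mul_right_inj' hb

theorem finrank_ker_galoisAltForm [FiniteDimensional K L] [Algebra.IsSeparable K L]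
    {σ : L ≃ₐ[K] L} (hσ : Odd (orderOf σ)) {b : L} (hb : b ≠ 0) :
    finrank K (LinearMap.ker (galoisAltForm b σ)) =
      finrank K (fixedField (Subgroup.zpowers σ)) := by
  obtain ⟨r, hr⟩ := hσ
  have hN := evenPowProd_ne_zero (σ := σ) (r := r) hb
  let g : fixedField (Subgroup.zpowers σ) →ₗ[K] L :=
    LinearMap.mulLeft K (evenPowProd σ r b)⁻¹ ∘ₗ (fixedField _).val.toLinearMap
  have hker : LinearMap.ker (galoisAltForm b σ) = LinearMap.range g := by
    ext x
    rw [mem_ker_galoisAltForm_iff_mul_mem_fixedField hr hb]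
    constructor
    · exact fun hx => ⟨⟨_, hx⟩, inv_mul_cancel_left₀ hN x⟩
    · rintro ⟨z, rfl⟩
      simp [g, mul_inv_cancel_left₀ hN]
  rw [hker, LinearMap.finrank_range_of_inj]
  exact fun u v huv => Subtype.ext (mul_left_cancel₀ (inv_ne_zero hN) huv)

theorem finrank_fixedField_zpowers_mul_orderOf [FiniteDimensional K L] (σ : L ≃ₐ[K] L) :
    finrank K (fixedField (Subgroup.zpowers σ)) * orderOf σ = finrank K L := by
  rw [← Nat.card_zpowers, ← finrank_fixedField_eq_card, finrank_mul_finrank]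

theorem statement3_general [FiniteDimensional K L] [IsGalois K L]
    (n : ℕ) (hn : Module.finrank K L = n)
    (σ : L ≃ₐ[K] L) (r : ℕ) (hord : orderOf σ = 2 * r + 1) :
    ∀ b : L, b ≠ 0 → formRank (galoisAltForm b σ) = n - n / (2 * r + 1) := by
  intro b hb
  have hfix : finrank K (fixedField (Subgroup.zpowers σ)) = n / (2 * r + 1) := by
    rw [← hn, ← finrank_fixedField_zpowers_mul_orderOf σ, hord,
      Nat.mul_div_cancel _ (Nat.succ_pos _)]
  rw [formRank, finrank_ker_galoisAltForm (hord ▸ odd_two_mul_add_one r) hb, hfix, hn]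

/-- if `σ` has odd order `2r+1 > 1`, then for every nonzero `b`
the form `f_{b,σ}` has rank `n − n/(2r+1)`. -/
theorem statement3 [FiniteDimensional K L] [IsGalois K L]
    (n : ℕ) (hn : Module.finrank K L = n)
    (σ : L ≃ₐ[K] L) (r : ℕ) (hr : 1 ≤ r) (hord : orderOf σ = 2 * r + 1) :
    ∀ b : L, b ≠ 0 → formRank (galoisAltForm b σ) = n - n / (2 * r + 1) :=
  statement3_general n hn σ r hord
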